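/- arXiv:math/0408027 — 4 statements merged into one kernel-verified Lean document; each statement's English description precedes it below -/
import Mathlib

section
/- Let V, W be finite-dimensional complex Hermitian vector spaces with dim W = r. Every solution (B₁, B₂, i, j) of the ADHM equations [B₁,B₂] + ij = 0 and [B₁,B₁†] + [B₂,B₂†] + ii† − j†j = ξ·1_V with ξ > 0 is stable. -/
variable {V W : Type*} [NormedAddCommGroup V] [InnerProductSpace ℂ V]
  [NormedAddCommGroup W] [InnerProductSpace ℂ W]
  [FiniteDimensional ℂ V] [FiniteDimensional ℂ W]

open LinearMap in
lemma my_trace_eq_sum_inner (f : V →ₗ[ℂ] V) :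
    trace ℂ V f = ∑ k, inner ℂ ((stdOrthonormalBasis ℂ V) k) (f ((stdOrthonormalBasis ℂ V) k)) := by
  rw [LinearMap.trace_eq_matrix_trace ℂ (stdOrthonormalBasis ℂ V).toBasis, Matrix.trace]
  simp [Matrix.diag, LinearMap.toMatrix_apply, OrthonormalBasis.coe_toBasis,
    OrthonormalBasis.coe_toBasis_repr_apply, OrthonormalBasis.repr_apply_apply]

open LinearMap in
lemma my_trace_adjoint_comp (A : V →ₗ[ℂ] W) :
    ∃ r : ℝ, 0 ≤ r ∧ trace ℂ V (adjoint A ∘ₗ A) = (r : ℂ) := by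
  refine ⟨∑ k, ‖A ((stdOrthonormalBasis ℂ V) k)‖ ^ 2,
    Finset.sum_nonneg fun _ _ => by positivity, ?_⟩
  rw [my_trace_eq_sum_inner]
  push_cast
  refine Finset.sum_congr rfl fun k _ => ?_
  simp [LinearMap.adjoint_inner_right, inner_self_eq_norm_sq_to_K]

def ADHMStable (B₁ B₂ : V →ₗ[ℂ] V) (i : W →ₗ[ℂ] V) : Prop :=
  ∀ S : Submodule ℂ V, S ≠ ⊤ → (∀ v ∈ S, B₁ v ∈ S) → (∀ v ∈ S, B₂ v ∈ S) →
    ¬ LinearMap.range i ≤ S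

open LinearMap

theorem adhm_xi_pos_stable (B₁ B₂ : V →ₗ[ℂ] V) (i : W →ₗ[ℂ] V) (j : V →ₗ[ℂ] W)
    (ξ : ℝ) (hξ : 0 < ξ)
    (h1 : B₁ ∘ₗ B₂ - B₂ ∘ₗ B₁ + i ∘ₗ j = 0)
    (h2 : B₁ ∘ₗ LinearMap.adjoint B₁ - LinearMap.adjoint B₁ ∘ₗ B₁ +
          (B₂ ∘ₗ LinearMap.adjoint B₂ - LinearMap.adjoint B₂ ∘ₗ B₂) +
          i ∘ₗ LinearMap.adjoint i - LinearMap.adjoint j ∘ₗ j =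
          (ξ : ℂ) • (LinearMap.id : V →ₗ[ℂ] V)) :
    ADHMStable B₁ B₂ i := by
  intro S hS hB1 hB2 hrange
  set T := Sᗮ with hT
  set Q : V →ₗ[ℂ] V := T.subtype ∘ₗ ((T.orthogonalProjectionOnto : V →L[ℂ] T) : V →ₗ[ℂ] T)
    with hQdef
  have hQapp : ∀ v, Q v = (T.orthogonalProjectionOnto v : V) := fun _ => rfl
  have hQadj : adjoint Q = Q := by
    symm
    rw [LinearMap.eq_adjoint_iff]
    intro x y
    simpa [hQapp] using T.inner_starProjection_left_eq_right x y
  have hQstar : star Q = Q := by rw [LinearMap.star_eq_adjoint, hQadj]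
  have hQQ : Q * Q = Q := by
    ext v
    show ((T.orthogonalProjectionOnto ((T.orthogonalProjectionOnto v : V))) : V) = _
    rw [Submodule.orthogonalProjectionOnto_mem_subspace_eq_self (T.orthogonalProjectionOnto v)]
    rfl
  have hQS : ∀ v ∈ S, Q v = 0 := by
    intro v hv
    show ((T.orthogonalProjectionOnto v : V)) = 0
    rw [Submodule.orthogonalProjectionOnto_apply_of_mem_orthogonal
      (Submodule.le_orthogonal_orthogonal S hv)]
    rfl
  have hsub : ∀ v, v - Q v ∈ S := by
    intro v
    have h := Submodule.sub_starProjection_mem_orthogonal (K := T) v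
    have h2' : Sᗮᗮ = S := Submodule.orthogonal_orthogonal S
    rw [← h2']
    exact h
  -- Q * B * Q = Q * B for B-invariant S
  have hQB : ∀ B : V →ₗ[ℂ] V, (∀ v ∈ S, B v ∈ S) → Q * B * Q = Q * B := by
    intro B hB
    ext v
    have h1' : B v - B (Q v) ∈ S := by
      have := hB _ (hsub v)
      simpa [map_sub] using this
    have h2' := hQS _ h1'
    rw [map_sub] at h2'
    have := sub_eq_zero.mp h2'
    simpa [Module.End.mul_apply] using this.symm
  have hQBstar : ∀ B : V →ₗ[ℂ] V, (∀ v ∈ S, B v ∈ S) → Q * star B * Q = star B * Q := by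
    intro B hB
    have h := congrArg star (hQB B hB)
    simpa [star_mul, hQstar, mul_assoc] using h
  have hQi : ∀ w, Q (i w) = 0 := fun w => hQS _ (hrange (LinearMap.mem_range_self i w))
  -- the six terms
  -- term B: trace (Q ∘ (B ∘ B† - B† ∘ B) ∘ Q) = - trace (adjoint R ∘ R)
  have termB : ∀ B : V →ₗ[ℂ] V, (∀ v ∈ S, B v ∈ S) →
      trace ℂ V (Q ∘ₗ (B ∘ₗ adjoint B) ∘ₗ Q) - trace ℂ V (Q ∘ₗ (adjoint B ∘ₗ B) ∘ₗ Q) =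
      - trace ℂ V (adjoint (B * Q - Q * (B * Q)) ∘ₗ (B * Q - Q * (B * Q))) := by
    intro B hB
    set u : V →ₗ[ℂ] V := B * Q with hu
    set x : V →ₗ[ℂ] V := Q * u with hx
    have hstaru : star u = star Q * star B := by rw [hu, star_mul]
    have hstarx : star x = star u * Q := by rw [hx, star_mul, hQstar]
    have hbq : Q * star B * Q = star B * Q := hQBstar B hB
    have hQx : Q * x = x := by rw [hx, ← mul_assoc, hQQ]
    have c1 : Q ∘ₗ (B ∘ₗ adjoint B) ∘ₗ Q = x * star x := by
      show Q * (B * star B) * Q = x * star x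
      symm
      calc x * star x = (Q * (B * Q)) * ((Q * star B) * Q) := by
            rw [hstarx, hstaru, hQstar, hx, hu]
        _ = (Q * B) * (Q * (star B * Q)) := by
            rw [show (Q * (B * Q)) * ((Q * star B) * Q) = (Q * B) * ((Q * Q) * (star B * Q))
              from by noncomm_ring, hQQ]
        _ = (Q * B) * (star B * Q) := by
            rw [show Q * (star B * Q) = Q * star B * Q from by noncomm_ring, hbq]
        _ = Q * (B * star B) * Q := by noncomm_ring
    have hxu : star x * u = star u * x := by rw [hstarx, hx]; noncomm_ring
    have hxx : star x * x = star u * x := by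
      rw [show star x * x = star u * (Q * x) from by rw [hstarx]; noncomm_ring, hQx]
    have c2 : Q ∘ₗ (adjoint B ∘ₗ B) ∘ₗ Q = star x * x + star (u - x) * (u - x) := by
      show Q * (star B * B) * Q = _
      symm
      calc star x * x + star (u - x) * (u - x)
          = star u * u - star u * x - star x * u + star x * x + star x * x := by
            rw [star_sub]; noncomm_ring
        _ = star u * u := by rw [hxu, hxx]; noncomm_ring
        _ = Q * (star B * B) * Q := by rw [hstaru, hu, hQstar]; noncomm_ring
    have c1' := congrArg (trace ℂ V) c1
    have c2' := congrArg (trace ℂ V) c2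
    rw [c1', c2', map_add]
    have hcomm : trace ℂ V (x * star x) = trace ℂ V (star x * x) :=
      LinearMap.trace_mul_comm ℂ x (star x)
    have hr : star (u - x) * (u - x) = adjoint (B * Q - Q * (B * Q)) ∘ₗ (B * Q - Q * (B * Q)) := by
      rw [← LinearMap.star_eq_adjoint]; rfl
    rw [hcomm, hr]
    ring
  -- i term
  have termi : Q ∘ₗ (i ∘ₗ adjoint i) ∘ₗ Q = 0 := by
    ext v
    simp [hQi]
  -- j term
  have termj : Q ∘ₗ (adjoint j ∘ₗ j) ∘ₗ Q = adjoint (j ∘ₗ Q) ∘ₗ (j ∘ₗ Q) := by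
    rw [LinearMap.adjoint_comp, hQadj]
    ext v
    simp [Module.End.mul_apply]
  -- RHS
  have hTne : T ≠ ⊥ := by
    rw [hT, Ne, Submodule.orthogonal_eq_bot_iff]
    exact hS
  have hfin : (0 : ℕ) < Module.finrank ℂ T := by
    rcases Nat.eq_zero_or_pos (Module.finrank ℂ T) with h | h
    · exact absurd (Submodule.finrank_eq_zero.mp h) hTne
    · exact h
  have htrQ : trace ℂ V Q = (Module.finrank ℂ T : ℂ) := by
    rw [hQdef, LinearMap.trace_comp_comm']
    have : ((T.orthogonalProjectionOnto : V →L[ℂ] T) : V →ₗ[ℂ] T) ∘ₗ T.subtype = LinearMap.id := by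
      ext v
      simp [Submodule.orthogonalProjectionOnto_mem_subspace_eq_self]
    rw [this, LinearMap.trace_id]
  have rhs : trace ℂ V (Q ∘ₗ ((ξ : ℂ) • (LinearMap.id : V →ₗ[ℂ] V)) ∘ₗ Q) =
      (ξ : ℂ) * (Module.finrank ℂ T : ℂ) := by
    have : Q ∘ₗ ((ξ : ℂ) • (LinearMap.id : V →ₗ[ℂ] V)) ∘ₗ Q = (ξ : ℂ) • (Q * Q) := by
      ext v; simp [Module.End.mul_apply]
    rw [this, hQQ, map_smul, htrQ, smul_eq_mul]
  -- assemble
  have key := congrArg (fun f : V →ₗ[ℂ] V => trace ℂ V (Q ∘ₗ f ∘ₗ Q)) h2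
  simp only [LinearMap.comp_add, LinearMap.add_comp, LinearMap.comp_sub, LinearMap.sub_comp,
    map_add, map_sub] at key
  rw [rhs] at key
  obtain ⟨r1, hr1, hr1e⟩ := my_trace_adjoint_comp (B₁ * Q - Q * (B₁ * Q))
  obtain ⟨r2, hr2, hr2e⟩ := my_trace_adjoint_comp (B₂ * Q - Q * (B₂ * Q))
  obtain ⟨r3, hr3, hr3e⟩ := my_trace_adjoint_comp (j ∘ₗ Q)
  have e1 := termB B₁ hB1
  have e2 := termB B₂ hB2
  rw [hr1e] at e1
  rw [hr2e] at e2
  have key2 : (-(r1 : ℂ)) + (-(r2 : ℂ)) + 0 - (r3 : ℂ) =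
      (ξ : ℂ) * (Module.finrank ℂ T : ℂ) := by
    rw [← key]
    rw [← hr3e, ← termj]
    have ei : trace ℂ V (Q ∘ₗ (i ∘ₗ adjoint i) ∘ₗ Q) = 0 := by rw [termi]; simp
    rw [← ei]
    have : Q ∘ₗ (B₁ ∘ₗ adjoint B₁) ∘ₗ Q = Q ∘ₗ (B₁ ∘ₗ adjoint B₁) ∘ₗ Q := rfl
    linear_combination -e1 - e2
  have hre := congrArg Complex.re key2
  push_cast at hre
  simp at hre
  have : (1 : ℝ) ≤ (Module.finrank ℂ T : ℝ) := by exact_mod_cast hfin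
  nlinarith [mul_pos hξ (lt_of_lt_of_le one_pos this)]
end

section
/- Let V, W be finite-dimensional complex Hermitian vector spaces and (B₁, B₂, i, j) a stable solution of the real ADHM equations [B₁,B₂] + ij = 0 and [B₁,B₁†] + [B₂,B₂†] + ii† − j†j = 0. Define the complex ADHM datum B⃗ = (B₁₁, B₁₂, B₂₁, B₂₂, i₁, i₂, j₁, j₂) = (B₁, B₂, −B₂†, B₁†, i, −j†, j, i†). Then B⃗ satisfies the complex ADHM equations: [B₁₁,B₁₂] + i₁j₁ = 0, [B₂₁,B₂₂] + i₂j₂ = 0, and [B₁₁,B₂₂] + [B₂₁,B₁₂] + i₁j₂ + i₂j₁ = 0. -/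
/-!
The second complex equation is minus the adjoint of the first one, `[B₁,B₂] + ij = 0`, and
the third is the real moment map equation with its terms regrouped, since
`[-B₂†, B₂] = [B₂, B₂†]` and `i₂j₁ = -j†j`.
-/

variable {V W : Type*} [NormedAddCommGroup V] [InnerProductSpace ℂ V]
  [NormedAddCommGroup W] [InnerProductSpace ℂ W]
  [FiniteDimensional ℂ V] [FiniteDimensional ℂ W]

section

open LinearMap

variable {𝕜 E F : Type*} [RCLike 𝕜] [NormedAddCommGroup E] [InnerProductSpace 𝕜 E]
  [NormedAddCommGroup F] [InnerProductSpace 𝕜 F] [FiniteDimensional 𝕜 E] [FiniteDimensional 𝕜 F]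

theorem LinearMap.adjoint_commutator_add_comp (A B : E →ₗ[𝕜] E) (i : F →ₗ[𝕜] E)
    (j : E →ₗ[𝕜] F) :
    adjoint (A ∘ₗ B - B ∘ₗ A + i ∘ₗ j) =
      adjoint B ∘ₗ adjoint A - adjoint A ∘ₗ adjoint B + adjoint j ∘ₗ adjoint i := by
  simp only [map_add, map_sub, adjoint_comp]

end

theorem real_solution_satisfies_complex_adhm_general
    (B₁ B₂ : V →ₗ[ℂ] V) (i : W →ₗ[ℂ] V) (j : V →ₗ[ℂ] W)
    (h1 : B₁ ∘ₗ B₂ - B₂ ∘ₗ B₁ + i ∘ₗ j = 0)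
    (h2 : B₁ ∘ₗ LinearMap.adjoint B₁ - LinearMap.adjoint B₁ ∘ₗ B₁ +
          (B₂ ∘ₗ LinearMap.adjoint B₂ - LinearMap.adjoint B₂ ∘ₗ B₂) +
          i ∘ₗ LinearMap.adjoint i - LinearMap.adjoint j ∘ₗ j = 0) :
    (B₁ ∘ₗ B₂ - B₂ ∘ₗ B₁ + i ∘ₗ j = 0) ∧
    ((-LinearMap.adjoint B₂) ∘ₗ LinearMap.adjoint B₁ -
      LinearMap.adjoint B₁ ∘ₗ (-LinearMap.adjoint B₂) +
      (-LinearMap.adjoint j) ∘ₗ LinearMap.adjoint i = 0) ∧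
    (B₁ ∘ₗ LinearMap.adjoint B₁ - LinearMap.adjoint B₁ ∘ₗ B₁ +
      ((-LinearMap.adjoint B₂) ∘ₗ B₂ - B₂ ∘ₗ (-LinearMap.adjoint B₂)) +
      i ∘ₗ LinearMap.adjoint i + (-LinearMap.adjoint j) ∘ₗ j = 0) := by
  refine ⟨h1, ?_, ?_⟩
  · calc _ = -LinearMap.adjoint (B₁ ∘ₗ B₂ - B₂ ∘ₗ B₁ + i ∘ₗ j) := by
          rw [LinearMap.adjoint_commutator_add_comp]
          simp only [LinearMap.neg_comp, LinearMap.comp_neg]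
          abel
      _ = 0 := by rw [h1, map_zero, neg_zero]
  · convert h2 using 1
    simp only [LinearMap.neg_comp, LinearMap.comp_neg]
    abel

/-- A stable solution of the real ADHM equations yields, via the assignment
`(B₁₁,B₁₂,B₂₁,B₂₂,i₁,i₂,j₁,j₂) = (B₁,B₂,−B₂†,B₁†,i,−j†,j,i†)`, a solution of
the three complex ADHM equations. -/
theorem real_solution_satisfies_complex_adhm
    (B₁ B₂ : V →ₗ[ℂ] V) (i : W →ₗ[ℂ] V) (j : V →ₗ[ℂ] W)
    (hstab : ADHMStable B₁ B₂ i)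
    (h1 : B₁ ∘ₗ B₂ - B₂ ∘ₗ B₁ + i ∘ₗ j = 0)
    (h2 : B₁ ∘ₗ LinearMap.adjoint B₁ - LinearMap.adjoint B₁ ∘ₗ B₁ +
          (B₂ ∘ₗ LinearMap.adjoint B₂ - LinearMap.adjoint B₂ ∘ₗ B₂) +
          i ∘ₗ LinearMap.adjoint i - LinearMap.adjoint j ∘ₗ j = 0) :
    (B₁ ∘ₗ B₂ - B₂ ∘ₗ B₁ + i ∘ₗ j = 0) ∧
    ((-LinearMap.adjoint B₂) ∘ₗ LinearMap.adjoint B₁ -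
      LinearMap.adjoint B₁ ∘ₗ (-LinearMap.adjoint B₂) +
      (-LinearMap.adjoint j) ∘ₗ LinearMap.adjoint i = 0) ∧
    (B₁ ∘ₗ LinearMap.adjoint B₁ - LinearMap.adjoint B₁ ∘ₗ B₁ +
      ((-LinearMap.adjoint B₂) ∘ₗ B₂ - B₂ ∘ₗ (-LinearMap.adjoint B₂)) +
      i ∘ₗ LinearMap.adjoint i + (-LinearMap.adjoint j) ∘ₗ j = 0) :=
  real_solution_satisfies_complex_adhm_general B₁ B₂ i j h1 h2
end

section
/- Let V, W be finite-dimensional complex Hermitian vector spaces, (B₁, B₂, i, j) a stable solution of [B₁,B₂] + ij = 0 and [B₁,B₁†] + [B₂,B₂†] + ii† − j†j = 0, and for (z,w) ∈ ℂ² \ {0} set B̃₁ = zB₁ − wB₂†, B̃₂ = zB₂ + wB₁†, ĩ = zi − wj†. Then for every (z,w) ≠ (0,0), the triple (B̃₁, B̃₂, ĩ) is stable, i.e. no proper subspace S ⊊ V satisfies B̃₁(S) ⊆ S, B̃₂(S) ⊆ S, and ĩ(W) ⊆ S. -/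
variable {V W : Type*} [NormedAddCommGroup V] [InnerProductSpace ℂ V]
  [NormedAddCommGroup W] [InnerProductSpace ℂ W]
  [FiniteDimensional ℂ V] [FiniteDimensional ℂ W]

open LinearMap

/-- Auxiliary: the trace of `f† ∘ f` is a nonnegative real, zero only for `f = 0`. -/
lemma ADHM.trace_adjoint_self (f : V →ₗ[ℂ] W) :
    ∃ r : ℝ, 0 ≤ r ∧ trace ℂ V (adjoint f ∘ₗ f) = (r : ℂ) ∧ (r = 0 → f = 0) := by
  classical
  set b := stdOrthonormalBasis ℂ V
  have htr : trace ℂ V (adjoint f ∘ₗ f) = ∑ k, (‖f (b k)‖^2 : ℂ) := by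
    rw [trace_eq_matrix_trace ℂ b.toBasis, Matrix.trace]
    congr 1
    ext k
    rw [Matrix.diag_apply, toMatrix_apply, OrthonormalBasis.coe_toBasis,
      OrthonormalBasis.coe_toBasis_repr_apply, b.repr_apply_apply,
      comp_apply, adjoint_inner_right, inner_self_eq_norm_sq_to_K]
    norm_cast
  refine ⟨∑ k, ‖f (b k)‖^2, Finset.sum_nonneg fun k _ => sq_nonneg _, by push_cast [htr]; ring, ?_⟩
  intro h0
  have hz : ∀ k, f (b k) = 0 := by
    intro k
    have := (Finset.sum_eq_zero_iff_of_nonneg (fun k _ => sq_nonneg ‖f (b k)‖)).mp h0 k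
      (Finset.mem_univ k)
    simpa [pow_eq_zero_iff] using this
  apply b.toBasis.ext
  intro k
  simp [hz k]

/-- Auxiliary: the projected trace of a commutator `[A, A†]`. -/
lemma ADHM.trace_commutator_proj (P A : V →ₗ[ℂ] V) (hP : adjoint P = P) (hP2 : P ∘ₗ P = P)
    (hA : P ∘ₗ (A ∘ₗ P) = P ∘ₗ A) :
    trace ℂ V (P ∘ₗ ((A ∘ₗ adjoint A) ∘ₗ P)) - trace ℂ V (P ∘ₗ ((adjoint A ∘ₗ A) ∘ₗ P))
      = - trace ℂ V (adjoint (A ∘ₗ P - P ∘ₗ (A ∘ₗ P)) ∘ₗ (A ∘ₗ P - P ∘ₗ (A ∘ₗ P))) := by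
  have hP2' : P * P = P := by simpa [Module.End.mul_eq_comp] using hP2
  have hA2 : P * A * P = P * A := by simpa [mul_assoc, Module.End.mul_eq_comp, LinearMap.comp_assoc] using hA
  have hA' : P * adjoint A * P = adjoint A * P := by
    have := congrArg LinearMap.adjoint hA
    simp only [adjoint_comp, hP] at this
    simpa [mul_assoc, Module.End.mul_eq_comp] using this
  have h4 : adjoint A * P * A * P = adjoint A * P * A := by
    calc adjoint A * P * A * P = adjoint A * (P * A * P) := by simp [mul_assoc]
      _ = adjoint A * (P * A) := by rw [hA2]
      _ = adjoint A * P * A := by simp [mul_assoc]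
  have h5 : adjoint A * P * P * A = adjoint A * P * A := by
    calc adjoint A * P * P * A = adjoint A * (P * P) * A := by simp [mul_assoc]
      _ = adjoint A * P * A := by rw [hP2']
  have hK : adjoint (A ∘ₗ P - P ∘ₗ (A ∘ₗ P)) ∘ₗ (A ∘ₗ P - P ∘ₗ (A ∘ₗ P))
      = P ∘ₗ ((adjoint A ∘ₗ A) ∘ₗ P) - adjoint A ∘ₗ (P ∘ₗ A) := by
    rw [hA]
    simp only [map_sub, adjoint_comp, hP]
    simp only [← Module.End.mul_eq_comp, sub_mul, mul_sub, ← mul_assoc]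
    rw [hA', h4, h5]
    abel
  have t1 : trace ℂ V (P ∘ₗ ((A ∘ₗ adjoint A) ∘ₗ P)) = trace ℂ V (adjoint A ∘ₗ (P ∘ₗ A)) := by
    simp only [← Module.End.mul_eq_comp]
    rw [show P * ((A * adjoint A) * P) = (P * A * adjoint A) * P by noncomm_ring,
      trace_mul_comm, show P * (P * A * adjoint A) = (P * P) * (A * adjoint A) by noncomm_ring,
      hP2', show P * (A * adjoint A) = (P * A) * adjoint A by noncomm_ring,
      trace_mul_comm]
  rw [hK, map_sub, t1]
  ring

/-- Auxiliary: the algebraic identity expressing the "real moment map" of the rotated datum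
in terms of the original moment maps. -/
lemma ADHM.tilde_real_eq (B₁ B₂ : V →ₗ[ℂ] V) (i : W →ₗ[ℂ] V) (j : V →ₗ[ℂ] W) (z w : ℂ) :
    (z•B₁ - w•adjoint B₂) ∘ₗ adjoint (z•B₁ - w•adjoint B₂)
      - adjoint (z•B₁ - w•adjoint B₂) ∘ₗ (z•B₁ - w•adjoint B₂)
      + ((z•B₂ + w•adjoint B₁) ∘ₗ adjoint (z•B₂ + w•adjoint B₁)
        - adjoint (z•B₂ + w•adjoint B₁) ∘ₗ (z•B₂ + w•adjoint B₁))
      + (z•i - w•adjoint j) ∘ₗ adjoint (z•i - w•adjoint j)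
      - adjoint (z•j + w•adjoint i) ∘ₗ (z•j + w•adjoint i)
    = (z * starRingEnd ℂ z - w * starRingEnd ℂ w) •
        (B₁ ∘ₗ adjoint B₁ - adjoint B₁ ∘ₗ B₁ + (B₂ ∘ₗ adjoint B₂ - adjoint B₂ ∘ₗ B₂)
          + i ∘ₗ adjoint i - adjoint j ∘ₗ j)
      + (-(2*z*starRingEnd ℂ w)) • (B₁ ∘ₗ B₂ - B₂ ∘ₗ B₁ + i ∘ₗ j)
      + (-(2*starRingEnd ℂ z*w)) • adjoint (B₁ ∘ₗ B₂ - B₂ ∘ₗ B₁ + i ∘ₗ j) := by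
  simp only [map_sub, map_add, LinearEquiv.map_smulₛₗ, adjoint_adjoint, adjoint_comp]
  ext v
  simp only [coe_comp, Function.comp_apply, LinearMap.add_apply, LinearMap.sub_apply, LinearMap.smul_apply, map_add, map_sub,
    map_smul, smul_smul, smul_sub, smul_add]
  module

/-- The complexified datum of a stable real ADHM solution is stable at every
point `(z,w) ≠ (0,0)` of `ℂ²`. -/
theorem real_solution_cpx_stable
    (B₁ B₂ : V →ₗ[ℂ] V) (i : W →ₗ[ℂ] V) (j : V →ₗ[ℂ] W)
    (hstab : ADHMStable B₁ B₂ i)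
    (h1 : B₁ ∘ₗ B₂ - B₂ ∘ₗ B₁ + i ∘ₗ j = 0)
    (h2 : B₁ ∘ₗ LinearMap.adjoint B₁ - LinearMap.adjoint B₁ ∘ₗ B₁ +
          (B₂ ∘ₗ LinearMap.adjoint B₂ - LinearMap.adjoint B₂ ∘ₗ B₂) +
          i ∘ₗ LinearMap.adjoint i - LinearMap.adjoint j ∘ₗ j = 0) :
    ∀ z w : ℂ, (z, w) ≠ (0, 0) →
      ADHMStable (z • B₁ - w • LinearMap.adjoint B₂)
        (z • B₂ + w • LinearMap.adjoint B₁)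
        (z • i - w • LinearMap.adjoint j) := by
  intro z w hzw S hS hS1 hS2 hle
  classical
  set a1 : V →ₗ[ℂ] V := z • B₁ - w • adjoint B₂ with ha1
  set a2 : V →ₗ[ℂ] V := z • B₂ + w • adjoint B₁ with ha2
  set it : W →ₗ[ℂ] V := z • i - w • adjoint j with hait
  set jt : V →ₗ[ℂ] W := z • j + w • adjoint i with hajt
  -- the nonvanishing scalar
  have hν : z * starRingEnd ℂ z + w * starRingEnd ℂ w ≠ 0 := by
    intro h
    rw [Complex.mul_conj, Complex.mul_conj, ← Complex.ofReal_add, Complex.ofReal_eq_zero] at h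
    have hz0 : Complex.normSq z = 0 := by
      have := Complex.normSq_nonneg z
      have := Complex.normSq_nonneg w
      linarith
    have hw0 : Complex.normSq w = 0 := by
      have := Complex.normSq_nonneg z
      linarith
    exact hzw (by simp [Complex.normSq_eq_zero.mp hz0, Complex.normSq_eq_zero.mp hw0])
  -- the orthogonal projection onto Sᗮ
  set U : Submodule ℂ V := Sᗮ with hU
  set P : V →ₗ[ℂ] V := U.subtype ∘ₗ (Submodule.orthogonalProjectionOnto U).toLinearMap with hPdef
  have hPapp : ∀ x : V, P x = (Submodule.orthogonalProjectionOnto U x : V) := fun x => rfl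
  have hP : adjoint P = P := by
    refine ((eq_adjoint_iff P P).mpr ?_).symm
    intro x y
    exact Submodule.inner_starProjection_left_eq_right U x y
  have hP2 : P ∘ₗ P = P := by
    ext x
    simp [hPapp, Submodule.orthogonalProjectionOnto_mem_subspace_eq_self,
      Submodule.starProjection_eq_self_iff, Submodule.starProjection_apply_mem]
  have hPzero : ∀ x ∈ S, P x = 0 := by
    intro x hx
    have hx' : x ∈ Uᗮ := Submodule.le_orthogonal_orthogonal S hx
    simp [hPapp, Submodule.orthogonalProjectionOnto_apply_of_mem_orthogonal hx']
  have hsub : ∀ x : V, x - P x ∈ S := by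
    intro x
    have h := Submodule.starProjection_add_starProjection_orthogonal (K := S) x
    have : x - P x = (Submodule.orthogonalProjectionOnto S x : V) := (eq_sub_of_add_eq h).symm
    rw [this]
    exact Submodule.coe_mem _
  have hmem : ∀ x : V, P x = 0 → x ∈ S := by
    intro x hx
    have := hsub x
    rwa [hx, sub_zero] at this
  -- invariance under the tilde maps
  have hinv : ∀ A : V →ₗ[ℂ] V, (∀ v ∈ S, A v ∈ S) → P ∘ₗ (A ∘ₗ P) = P ∘ₗ A := by
    intro A hA
    ext x
    simp only [comp_apply]
    have h1' : A x - A (P x) ∈ S := by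
      rw [← map_sub]
      exact hA _ (hsub x)
    have h2' := hPzero _ h1'
    rw [map_sub] at h2'
    exact (sub_eq_zero.mp h2').symm
  have hinv1 : P ∘ₗ (a1 ∘ₗ P) = P ∘ₗ a1 := hinv a1 hS1
  have hinv2 : P ∘ₗ (a2 ∘ₗ P) = P ∘ₗ a2 := hinv a2 hS2
  have hPit : P ∘ₗ it = 0 := by
    ext x
    simp only [comp_apply, LinearMap.zero_apply]
    exact hPzero _ (hle (LinearMap.mem_range_self it x))
  -- the rotated real equation
  have hE : a1 ∘ₗ adjoint a1 - adjoint a1 ∘ₗ a1 + (a2 ∘ₗ adjoint a2 - adjoint a2 ∘ₗ a2)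
      + it ∘ₗ adjoint it - adjoint jt ∘ₗ jt = 0 := by
    rw [ha1, ha2, hait, hajt, ADHM.tilde_real_eq B₁ B₂ i j z w, h1, h2]
    simp
  -- taking the projected trace
  have h0 : trace ℂ V (P ∘ₗ ((a1 ∘ₗ adjoint a1 - adjoint a1 ∘ₗ a1
      + (a2 ∘ₗ adjoint a2 - adjoint a2 ∘ₗ a2) + it ∘ₗ adjoint it - adjoint jt ∘ₗ jt) ∘ₗ P)) = 0 := by
    rw [hE]
    simp
  have hexp : trace ℂ V (P ∘ₗ ((a1 ∘ₗ adjoint a1 - adjoint a1 ∘ₗ a1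
      + (a2 ∘ₗ adjoint a2 - adjoint a2 ∘ₗ a2) + it ∘ₗ adjoint it - adjoint jt ∘ₗ jt) ∘ₗ P))
      = (trace ℂ V (P ∘ₗ ((a1 ∘ₗ adjoint a1) ∘ₗ P)) - trace ℂ V (P ∘ₗ ((adjoint a1 ∘ₗ a1) ∘ₗ P)))
      + (trace ℂ V (P ∘ₗ ((a2 ∘ₗ adjoint a2) ∘ₗ P)) - trace ℂ V (P ∘ₗ ((adjoint a2 ∘ₗ a2) ∘ₗ P)))
      + trace ℂ V (P ∘ₗ ((it ∘ₗ adjoint it) ∘ₗ P))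
      - trace ℂ V (P ∘ₗ ((adjoint jt ∘ₗ jt) ∘ₗ P)) := by
    simp only [comp_sub, sub_comp, comp_add, add_comp, map_add, map_sub]
  have hit0 : trace ℂ V (P ∘ₗ ((it ∘ₗ adjoint it) ∘ₗ P)) = 0 := by
    have : P ∘ₗ ((it ∘ₗ adjoint it) ∘ₗ P) = (P ∘ₗ it) ∘ₗ (adjoint it ∘ₗ P) := by
      simp only [comp_assoc]
    rw [this, hPit, zero_comp, map_zero]
  have hjt : P ∘ₗ ((adjoint jt ∘ₗ jt) ∘ₗ P) = adjoint (jt ∘ₗ P) ∘ₗ (jt ∘ₗ P) := by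
    rw [adjoint_comp, hP]
    simp only [comp_assoc]
  obtain ⟨r1, hr1, ht1, hf1⟩ := ADHM.trace_adjoint_self (a1 ∘ₗ P - P ∘ₗ (a1 ∘ₗ P))
  obtain ⟨r2, hr2, ht2, hf2⟩ := ADHM.trace_adjoint_self (a2 ∘ₗ P - P ∘ₗ (a2 ∘ₗ P))
  obtain ⟨r3, hr3, ht3, hf3⟩ := ADHM.trace_adjoint_self (jt ∘ₗ P)
  rw [hexp, ADHM.trace_commutator_proj P a1 hP hP2 hinv1,
    ADHM.trace_commutator_proj P a2 hP hP2 hinv2, hit0, hjt, ht1, ht2, ht3] at h0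
  have hr0 : r1 + r2 + r3 = 0 := by
    have : ((r1 + r2 + r3 : ℝ) : ℂ) = 0 := by
      push_cast
      linear_combination -h0
    exact_mod_cast this
  have hr10 : r1 = 0 := by linarith
  have hr20 : r2 = 0 := by linarith
  have hr30 : r3 = 0 := by linarith
  have hK1 : a1 ∘ₗ P = P ∘ₗ (a1 ∘ₗ P) := sub_eq_zero.mp (hf1 hr10)
  have hK2 : a2 ∘ₗ P = P ∘ₗ (a2 ∘ₗ P) := sub_eq_zero.mp (hf2 hr20)
  have hM : jt ∘ₗ P = 0 := hf3 hr30
  have hit' : adjoint it ∘ₗ P = 0 := by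
    have := congrArg LinearMap.adjoint hPit
    simpa [adjoint_comp, hP] using this
  -- recover `i† ∘ P = 0`
  have hiP : adjoint i ∘ₗ P = 0 := by
    have hcomb : (z * starRingEnd ℂ z + w * starRingEnd ℂ w) • (adjoint i ∘ₗ P)
        = z • (adjoint it ∘ₗ P) + (starRingEnd ℂ w) • (jt ∘ₗ P) := by
      rw [hait, hajt]
      simp only [map_sub, map_add, LinearEquiv.map_smulₛₗ, adjoint_adjoint, sub_comp, add_comp,
        smul_comp]
      module
    rw [hit', hM] at hcomb
    simp only [smul_zero, add_zero] at hcomb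
    exact (smul_eq_zero.mp hcomb).resolve_left hν
  have hPi2 : P ∘ₗ i = 0 := by
    have := congrArg LinearMap.adjoint hiP
    simpa [adjoint_comp, hP, adjoint_adjoint] using this
  -- recover invariance of `Sᗮ` under `B₁†` and `B₂†`
  have hadj1 : adjoint a1 ∘ₗ P = P ∘ₗ (adjoint a1 ∘ₗ P) := by
    have := congrArg LinearMap.adjoint hinv1
    simp only [adjoint_comp, hP] at this
    simpa [comp_assoc] using this.symm
  have hadj2 : adjoint a2 ∘ₗ P = P ∘ₗ (adjoint a2 ∘ₗ P) := by
    have := congrArg LinearMap.adjoint hinv2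
    simp only [adjoint_comp, hP] at this
    simpa [comp_assoc] using this.symm
  have hB1c : adjoint B₁ ∘ₗ P = P ∘ₗ (adjoint B₁ ∘ₗ P) := by
    have hcomb : (z * starRingEnd ℂ z + w * starRingEnd ℂ w) •
        (adjoint B₁ ∘ₗ P - P ∘ₗ (adjoint B₁ ∘ₗ P))
        = z • (adjoint a1 ∘ₗ P - P ∘ₗ (adjoint a1 ∘ₗ P))
          + (starRingEnd ℂ w) • (a2 ∘ₗ P - P ∘ₗ (a2 ∘ₗ P)) := by
      rw [ha1, ha2]
      simp only [map_sub, map_add, LinearEquiv.map_smulₛₗ, adjoint_adjoint, sub_comp, add_comp,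
        smul_comp, comp_sub, comp_add, comp_smul]
      module
    rw [sub_eq_zero_of_eq hadj1, sub_eq_zero_of_eq hK2] at hcomb
    simp only [smul_zero, add_zero] at hcomb
    exact sub_eq_zero.mp ((smul_eq_zero.mp hcomb).resolve_left hν)
  have hB2c : adjoint B₂ ∘ₗ P = P ∘ₗ (adjoint B₂ ∘ₗ P) := by
    have hcomb : (z * starRingEnd ℂ z + w * starRingEnd ℂ w) •
        (adjoint B₂ ∘ₗ P - P ∘ₗ (adjoint B₂ ∘ₗ P))
        = (-(starRingEnd ℂ w)) • (a1 ∘ₗ P - P ∘ₗ (a1 ∘ₗ P))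
          + z • (adjoint a2 ∘ₗ P - P ∘ₗ (adjoint a2 ∘ₗ P)) := by
      rw [ha1, ha2]
      simp only [map_sub, map_add, LinearEquiv.map_smulₛₗ, adjoint_adjoint, sub_comp, add_comp,
        smul_comp, comp_sub, comp_add, comp_smul]
      module
    rw [sub_eq_zero_of_eq hK1, sub_eq_zero_of_eq hadj2] at hcomb
    simp only [smul_zero, add_zero, zero_add] at hcomb
    exact sub_eq_zero.mp ((smul_eq_zero.mp hcomb).resolve_left hν)
  have hdual : ∀ A : V →ₗ[ℂ] V, adjoint A ∘ₗ P = P ∘ₗ (adjoint A ∘ₗ P) →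
      ∀ v ∈ S, A v ∈ S := by
    intro A hA v hv
    have hd : P ∘ₗ A = P ∘ₗ (A ∘ₗ P) := by
      have := congrArg LinearMap.adjoint hA
      simpa [adjoint_comp, hP, adjoint_adjoint, comp_assoc] using this
    apply hmem
    have hdv := LinearMap.ext_iff.mp hd v
    simp only [comp_apply] at hdv
    rw [hdv, hPzero v hv, map_zero, map_zero]
  exact hstab S hS (hdual B₁ hB1c) (hdual B₂ hB2c) (by
    rintro x ⟨y, rfl⟩
    refine hmem _ ?_
    have := LinearMap.ext_iff.mp hPi2 y
    simpa using this)
end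

section
/- With α(x,y,z,w) : V → V⊕V⊕W the monad map of a complex ADHM datum satisfying the complex ADHM equations: if v ∈ V satisfies α(x,y,z,w)(v) = 0 for some (x,y,z,w) with (z,w) ≠ (0,0), then v is a simultaneous eigenvector: (zB₁₁+wB₂₁)v = −xv, (zB₁₂+wB₂₂)v = −yv, and (zj₁+wj₂)v = 0. Consequently, for fixed (z,w) ≠ (0,0), the set of (x,y) ∈ ℂ² for which α(x,y,z,w) fails to be injective is finite. -/
variable {V W : Type*} [AddCommGroup V] [Module ℂ V] [AddCommGroup W] [Module ℂ W]
  [FiniteDimensional ℂ V] [FiniteDimensional ℂ W]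

def monadAlpha (B₁₁ B₁₂ B₂₁ B₂₂ : V →ₗ[ℂ] V) (j₁ j₂ : V →ₗ[ℂ] W)
    (x y z w : ℂ) : V →ₗ[ℂ] V × V × W :=
  (z • B₁₁ + w • B₂₁ + x • LinearMap.id).prod
    ((z • B₁₂ + w • B₂₂ + y • LinearMap.id).prod (z • j₁ + w • j₂))

theorem monad_alpha_kernel_eigenvector_and_finite_noninjective
    (B₁₁ B₁₂ B₂₁ B₂₂ : V →ₗ[ℂ] V) (i₁ i₂ : W →ₗ[ℂ] V) (j₁ j₂ : V →ₗ[ℂ] W)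
    (heq1 : B₁₁ ∘ₗ B₁₂ - B₁₂ ∘ₗ B₁₁ + i₁ ∘ₗ j₁ = 0)
    (heq2 : B₂₁ ∘ₗ B₂₂ - B₂₂ ∘ₗ B₂₁ + i₂ ∘ₗ j₂ = 0)
    (heq3 : B₁₁ ∘ₗ B₂₂ - B₂₂ ∘ₗ B₁₁ + (B₂₁ ∘ₗ B₁₂ - B₁₂ ∘ₗ B₂₁) +
      i₁ ∘ₗ j₂ + i₂ ∘ₗ j₁ = 0) :
    (∀ x y z w : ℂ, (z, w) ≠ (0, 0) → ∀ v : V,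
      monadAlpha B₁₁ B₁₂ B₂₁ B₂₂ j₁ j₂ x y z w v = 0 →
        ((z • B₁₁ + w • B₂₁) v = (-x) • v ∧
         (z • B₁₂ + w • B₂₂) v = (-y) • v ∧
         (z • j₁ + w • j₂) v = 0)) ∧
    (∀ z w : ℂ, (z, w) ≠ (0, 0) →
      {p : ℂ × ℂ |
        ¬ Function.Injective
            (monadAlpha B₁₁ B₁₂ B₂₁ B₂₂ j₁ j₂ p.1 p.2 z w)}.Finite) := by
  have key : ∀ x y z w : ℂ, ∀ v : V,
      monadAlpha B₁₁ B₁₂ B₂₁ B₂₂ j₁ j₂ x y z w v = 0 →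
        ((z • B₁₁ + w • B₂₁) v = (-x) • v ∧
         (z • B₁₂ + w • B₂₂) v = (-y) • v ∧
         (z • j₁ + w • j₂) v = 0) := by
    intro x y z w v hv
    simp only [monadAlpha, LinearMap.prod_apply, Function.prod, Prod.mk_eq_zero,
      LinearMap.add_apply, LinearMap.smul_apply, LinearMap.id_apply] at hv
    obtain ⟨h1, h2, h3⟩ := hv
    refine ⟨?_, ?_, h3⟩
    · have := h1
      simp only [LinearMap.add_apply, LinearMap.smul_apply, neg_smul]
      linear_combination (norm := module) this
    · simp only [LinearMap.add_apply, LinearMap.smul_apply, neg_smul]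
      linear_combination (norm := module) h2
  refine ⟨fun x y z w _ v hv => key x y z w v hv, fun z w _ => ?_⟩
  have hsub : {p : ℂ × ℂ |
      ¬ Function.Injective (monadAlpha B₁₁ B₁₂ B₂₁ B₂₂ j₁ j₂ p.1 p.2 z w)} ⊆
      ((fun μ => -μ) '' spectrum ℂ (z • B₁₁ + w • B₂₁)) ×ˢ
      ((fun μ => -μ) '' spectrum ℂ (z • B₁₂ + w • B₂₂)) := by
    rintro ⟨x, y⟩ hp
    simp only [Set.mem_setOf_eq] at hp
    rw [← LinearMap.ker_eq_bot] at hp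
    obtain ⟨v, hv, hv0⟩ := Submodule.exists_mem_ne_zero_of_ne_bot hp
    obtain ⟨h1, h2, _⟩ := key x y z w v hv
    constructor
    · refine ⟨-x, ?_, by simp⟩
      rw [← Module.End.hasEigenvalue_iff_mem_spectrum]
      exact Module.End.hasEigenvalue_of_hasEigenvector ⟨Module.End.mem_eigenspace_iff.2 h1, hv0⟩
    · refine ⟨-y, ?_, by simp⟩
      rw [← Module.End.hasEigenvalue_iff_mem_spectrum]
      exact Module.End.hasEigenvalue_of_hasEigenvector ⟨Module.End.mem_eigenspace_iff.2 h2, hv0⟩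
  exact Set.Finite.subset
    (Set.Finite.prod ((Module.End.finite_spectrum _).image _)
      ((Module.End.finite_spectrum _).image _)) hsub
end
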